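/- Let K be a number field with ring of integers O_K and let S be a finite subset of O_K. Then S is n-universal if and only if for every non-zero prime ideal 𝔭 of O_K there exists a subset S' of S with n+1 elements which is almost uniformly distributed modulo 𝔭^k for every positive integer k. -/

import Mathlib

open scoped Classical
open NumberField

/-- A finite subset `S` of an integral domain `A` with field of fractions `K` is
`n`-universal if for every polynomial `P ∈ K[X]` of degree at most `n`, `P` maps `A`
into `A` if and only if `P` maps `S` into `A`. -/
def IsNUniversal (A K : Type*) [CommRing A] [IsDomain A] [Field K] [Algebra A K]
    [IsFractionRing A K] (n : ℕ) (S : Finset A) : Prop :=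
  ∀ P : Polynomial K, P.natDegree ≤ n →
    ((∀ a : A, ∃ b : A, Polynomial.eval (algebraMap A K a) P = algebraMap A K b) ↔
      ∀ s ∈ S, ∃ b : A, Polynomial.eval (algebraMap A K s) P = algebraMap A K b)

/-- A finite subset `T` of a commutative ring `B` is almost uniformly distributed
modulo an ideal `I` if for all `a, b ∈ B` the difference of the numbers of elements
of `T` congruent to `a` resp. `b` modulo `I` lies in `{-1, 0, 1}`. -/
def IsAUD {B : Type*} [CommRing B] (I : Ideal B) (T : Finset B) : Prop :=
  ∀ a b : B,
    ((T.filter fun t => t - a ∈ I).card : ℤ) - ((T.filter fun t => t - b ∈ I).card : ℤ) ∈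
      ({-1, 0, 1} : Set ℤ)

/-!
Fix a nonzero prime `𝔭` and write `ν_T(x)` for the `𝔭`-adic order of `∏ t ∈ T, (x - t)`.
Counting powers of `𝔭` gives `ν_T(x) = ∑_{k ≥ 1} #{t ∈ T | t ≡ x mod 𝔭^k}`, so the class sizes
of `T` modulo the powers of `𝔭` control these orders.

If `S' ⊆ S` has `n + 1` elements and is almost uniformly distributed modulo every `𝔭^k`, then
removing `s ∈ S'` makes the class of `s` the smallest one at every level, whence
`ν_{S' \ {s}}(s) ≤ ν_{S' \ {s}}(a)` for every `a ∉ S'`: all Lagrange coefficients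
`∏_{t ≠ s} (a - t) / (s - t)` are `𝔭`-integral, and a polynomial of degree `≤ n` that is integral
on `S'` is `𝔭`-integral everywhere.

Conversely, if `S` is `n`-universal, build `S'` greedily. Given an almost uniform `T ⊆ S` with
`#T ≤ n`, a polynomial `(w / u) ∏ t ∈ T, (X - t)` with `u ∣ w z ↔ z ∈ 𝔭 ^ c` shows that `ν_T`
attains its minimum over `R \ T` at some `s ∈ S`. Since a smallest class modulo `𝔭^k` contains a
smallest class modulo `𝔭^(k+1)`, some point lies in a smallest class at every level, and by the
counting formula so does every minimiser of `ν_T`; hence `insert s T` is again almost uniform.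
-/

open Polynomial Finset

section ClassCount

variable {R : Type*} [CommRing R]

noncomputable def classCount (I : Ideal R) (T : Finset R) (a : R) : ℕ :=
  #(T.filter fun t => t - a ∈ I)

variable {I J : Ideal R} {T : Finset R} {a b s x : R}

theorem isAUD_iff_classCount_le :
    IsAUD I T ↔ ∀ a b, classCount I T a ≤ classCount I T b + 1 := by
  refine ⟨fun h a b => ?_, fun h a b => ?_⟩ <;>
  · have hab := h a b
    have hba := h b a
    simp only [classCount, Set.mem_insert_iff, Set.mem_singleton_iff] at *
    omega

theorem classCount_congr (h : a - b ∈ I) : classCount I T a = classCount I T b := by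
  refine congrArg card (filter_congr fun t _ => ?_)
  rw [show t - b = t - a + (a - b) by ring]
  exact ⟨fun ht => add_mem ht h, fun ht => by simpa using sub_mem ht h⟩

theorem classCount_mono (hIJ : I ≤ J) : classCount I T a ≤ classCount J T a :=
  card_le_card (monotone_filter_right _ fun _ _ ht => hIJ ht)

theorem classCount_top : classCount ⊤ T a = #T := by
  simp [classCount]

theorem one_le_classCount (hs : s ∈ T) : 1 ≤ classCount I T s :=
  card_pos.2 ⟨s, mem_filter.2 ⟨hs, by simp⟩⟩

theorem classCount_insert (hx : x ∉ T) :
    classCount I (insert x T) a = classCount I T a + if x - a ∈ I then 1 else 0 := by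
  unfold classCount
  rw [filter_insert]
  split_ifs
  · exact card_insert_of_notMem fun h => hx (mem_filter.1 h).1
  · rfl

theorem classCount_erase_add (hs : s ∈ T) :
    classCount I (T.erase s) a + (if s - a ∈ I then 1 else 0) = classCount I T a := by
  rw [← classCount_insert (notMem_erase s T), insert_erase hs]

theorem IsAUD.insert (hT : IsAUD I T) (hx : x ∉ T)
    (hmin : ∀ b, classCount I T x ≤ classCount I T b) : IsAUD I (insert x T) := by
  rw [isAUD_iff_classCount_le] at hT ⊢
  intro a b
  rw [classCount_insert hx, classCount_insert hx]
  have := hT a b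
  by_cases hxa : x - a ∈ I
  · have := classCount_congr (T := T) hxa
    have := hmin b
    simp only [hxa, if_true]
    split_ifs <;> omega
  · simp only [hxa, if_false]
    split_ifs <;> omega

theorem IsAUD.classCount_erase_self_le (hT : IsAUD I T) (hs : s ∈ T) (a : R) :
    classCount I (T.erase s) s ≤ classCount I (T.erase s) a := by
  have hss := classCount_erase_add (I := I) (a := s) hs
  have hsa := classCount_erase_add (I := I) (a := a) hs
  rw [if_pos (by simp)] at hss
  by_cases h : s - a ∈ I
  · rw [if_pos h, ← classCount_congr (T := T) h] at hsa
    omega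
  · have := (isAUD_iff_classCount_le.1 hT) s a
    rw [if_neg h] at hsa
    omega

end ClassCount

theorem exists_forall_apply_add_le_of_forall_sum_le {G : Type*} [AddZeroClass G] {H : Finset G}
    (h0 : 0 ∈ H) {f : G → ℕ} (hf : ∀ a b, f a ≤ f b + 1) {x : G}
    (hx : ∀ y, ∑ h ∈ H, f (x + h) ≤ ∑ h ∈ H, f (y + h)) :
    ∃ h ∈ H, ∀ b, f (x + h) ≤ f b := by
  set c := Function.argmin f
  have hc : ∀ b, f c ≤ f b := fun b => Function.argmin_le f b
  by_contra! hne
  -- otherwise `f` is maximal on all of `x + H`, and the sum over `c + H` would be smaller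
  have hxc : ∀ h ∈ H, f (x + h) = f c + 1 := fun h hh => by
    obtain ⟨b, hb⟩ := hne h hh
    have := hc b
    have := hf (x + h) c
    omega
  refine (hx c).not_gt (sum_lt_sum (fun h hh => ?_) ⟨0, h0, ?_⟩)
  · rw [hxc h hh]
    exact hf _ c
  · rw [hxc 0 h0, add_zero]
    omega

section Descent

variable {R : Type*} [CommRing R] {I J : Ideal R} {T : Finset R}

theorem classCount_eq_card_filter_mk (a : R) :
    classCount I T a = #(T.filter fun t => Ideal.Quotient.mk I t = Ideal.Quotient.mk I a) := by
  unfold classCount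
  congr 1
  exact filter_congr fun t _ => Ideal.Quotient.eq.symm

theorem classCount_eq_sum_card_filter_mk [Fintype (R ⧸ I)] (hIJ : I ≤ J) (a : R) :
    classCount J T a = ∑ h ∈ univ.filter (· ∈ J.map (Ideal.Quotient.mk I)),
      #(T.filter fun t => Ideal.Quotient.mk I t = Ideal.Quotient.mk I a + h) := by
  simp only [classCount, card_filter]
  rw [sum_comm]
  refine sum_congr rfl fun t _ => ?_
  simp_rw [← sub_eq_iff_eq_add']
  rw [sum_ite_eq]
  simp [← map_sub, Ideal.mem_quotient_iff_mem hIJ]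

theorem exists_sub_mem_forall_classCount_le [Finite (R ⧸ I)] (hIJ : I ≤ J) (hT : IsAUD I T)
    {a₀ : R} (ha₀ : ∀ b, classCount J T a₀ ≤ classCount J T b) :
    ∃ a, a - a₀ ∈ J ∧ ∀ b, classCount I T a ≤ classCount I T b := by
  have := Fintype.ofFinite (R ⧸ I)
  let f : R ⧸ I → ℕ := fun c => #(T.filter fun t => Ideal.Quotient.mk I t = c)
  have hf : ∀ a b, f a ≤ f b + 1 := by
    intro a b
    obtain ⟨a, rfl⟩ := Ideal.Quotient.mk_surjective a
    obtain ⟨b, rfl⟩ := Ideal.Quotient.mk_surjective b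
    have := isAUD_iff_classCount_le.1 hT a b
    rwa [classCount_eq_card_filter_mk, classCount_eq_card_filter_mk] at this
  obtain ⟨h, hH, hmin⟩ := exists_forall_apply_add_le_of_forall_sum_le
    (H := univ.filter (· ∈ J.map (Ideal.Quotient.mk I))) (by simp) hf
    (x := Ideal.Quotient.mk I a₀) (by
      intro b
      obtain ⟨b, rfl⟩ := Ideal.Quotient.mk_surjective b
      have := ha₀ b
      rwa [classCount_eq_sum_card_filter_mk hIJ, classCount_eq_sum_card_filter_mk hIJ] at this)
  obtain ⟨j, hj, rfl⟩ := (Ideal.mem_map_iff_of_surjective _ Ideal.Quotient.mk_surjective).1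
    (mem_filter.1 hH).2
  refine ⟨a₀ + j, by simpa using hj, fun b => ?_⟩
  rw [classCount_eq_card_filter_mk, classCount_eq_card_filter_mk, map_add]
  exact hmin _

theorem exists_notMem_forall_classCount_pow_le {𝔭 : Ideal R} (hfin : ∀ k, Finite (R ⧸ 𝔭 ^ k))
    (hT : ∀ k, 0 < k → IsAUD (𝔭 ^ k) T) {k₀ : ℕ} {z : R} (hz : classCount (𝔭 ^ k₀) T z = 0) :
    ∃ y ∉ T, ∀ k b, classCount (𝔭 ^ k) T y ≤ classCount (𝔭 ^ k) T b := by
  have hlevels : ∀ K, ∃ a, ∀ k ≤ K, ∀ b, classCount (𝔭 ^ k) T a ≤ classCount (𝔭 ^ k) T b := by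
    intro K
    induction K with
    | zero => exact ⟨0, fun k hk b => by simp [Nat.le_zero.1 hk, classCount_top]⟩
    | succ K ih =>
      obtain ⟨a₀, ha₀⟩ := ih
      have := hfin (K + 1)
      obtain ⟨a, haa₀, ha⟩ := exists_sub_mem_forall_classCount_le
        (Ideal.pow_le_pow_right K.le_succ) (hT _ K.succ_pos) (ha₀ K le_rfl)
      refine ⟨a, fun k hk b => ?_⟩
      rcases hk.lt_or_eq with hk | rfl
      · rw [classCount_congr (Ideal.pow_le_pow_right (Nat.lt_succ_iff.1 hk) haa₀)]
        exact ha₀ k (Nat.lt_succ_iff.1 hk) b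
      · exact ha b
  obtain ⟨y, hy⟩ := hlevels k₀
  have hy0 : classCount (𝔭 ^ k₀) T y = 0 := Nat.eq_zero_of_le_zero (hz ▸ hy k₀ le_rfl z)
  refine ⟨y, fun hyT => ?_, fun k b => ?_⟩
  · have := one_le_classCount (I := 𝔭 ^ k₀) hyT
    omega
  · rcases le_or_gt k k₀ with hk | hk
    · exact hy k hk b
    · have := classCount_mono (T := T) (a := y) (Ideal.pow_le_pow_right (I := 𝔭) hk.le)
      omega

end Descent

theorem infinite_of_isPrime_of_ne_bot {R : Type*} [CommRing R] [IsDomain R] {𝔭 : Ideal R}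
    [𝔭.IsPrime] (hp0 : 𝔭 ≠ ⊥) : Infinite R := by
  have hR : ¬IsField R := Ring.not_isField_iff_exists_ideal_bot_lt_and_lt_top.2
    ⟨𝔭, bot_lt_iff_ne_bot.2 hp0, lt_top_iff_ne_top.2 Ideal.IsPrime.ne_top'⟩
  by_contra h
  rw [not_infinite_iff_finite] at h
  exact hR (Finite.isField_of_domain R)

theorem exists_algebraMap_eq_div_iff_dvd {R : Type*} [CommRing R] {K : Type*} [Field K]
    [Algebra R K] [IsFractionRing R K] {u z : R} (hu : u ≠ 0) :
    (∃ b, algebraMap R K z / algebraMap R K u = algebraMap R K b) ↔ u ∣ z := by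
  have hinj := IsFractionRing.injective R K
  simp_rw [div_eq_iff ((map_ne_zero_iff _ hinj).2 hu), ← map_mul, hinj.eq_iff, mul_comm _ u]
  exact ⟨fun ⟨b, hb⟩ => ⟨b, hb⟩, fun ⟨b, hb⟩ => ⟨b, hb⟩⟩

theorem Lagrange.eval_eq_sum_mul_prod_div {F ι : Type*} [Field F] [DecidableEq ι]
    {s : Finset ι} {v : ι → F} (hvs : Set.InjOn v s) {P : F[X]} (hP : P.degree < #s) (x : F) :
    P.eval x = ∑ i ∈ s,
      P.eval (v i) * ((∏ j ∈ s.erase i, (x - v j)) / ∏ j ∈ s.erase i, (v i - v j)) := by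
  conv_lhs => rw [Lagrange.eq_interpolate hvs hP]
  rw [Lagrange.interpolate_apply, eval_finsetSum]
  refine sum_congr rfl fun i _ => ?_
  rw [eval_mul, eval_C, Lagrange.basis, eval_prod, ← prod_div_distrib]
  congr 1
  refine prod_congr rfl fun j _ => ?_
  rw [Lagrange.basisDivisor, eval_mul, eval_C, eval_sub, eval_X, eval_C, inv_mul_eq_div]

section Dedekind

variable {R : Type*} [CommRing R] [IsDedekindDomain R] {𝔭 : Ideal R} [𝔭.IsPrime]
  {T : Finset R} {x : R}

/-- The `𝔭`-adic order of `∏ t ∈ T, (x - t)`, provided `x ∉ T`. -/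
noncomputable def nodalOrd (𝔭 : Ideal R) (T : Finset R) (x : R) : ℕ :=
  ∑ t ∈ T, multiplicity 𝔭 (Ideal.span {x - t})

theorem mem_pow_iff_le_multiplicity (hp0 : 𝔭 ≠ ⊥) {z : R} (hz : z ≠ 0) {k : ℕ} :
    z ∈ 𝔭 ^ k ↔ k ≤ multiplicity 𝔭 (Ideal.span {z}) := by
  rw [← Ideal.dvd_span_singleton]
  exact (FiniteMultiplicity.of_prime_left (Ideal.prime_of_isPrime hp0 ‹_›)
    (by simpa using hz)).pow_dvd_iff_le_multiplicity

theorem prod_sub_mem_pow_iff (hp0 : 𝔭 ≠ ⊥) (hx : x ∉ T) {k : ℕ} :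
    ∏ t ∈ T, (x - t) ∈ 𝔭 ^ k ↔ k ≤ nodalOrd 𝔭 T x := by
  have hprime := Ideal.prime_of_isPrime hp0 ‹_›
  have hfin : ∀ t ∈ T, FiniteMultiplicity 𝔭 (Ideal.span {x - t}) := fun t ht =>
    FiniteMultiplicity.of_prime_left hprime
      (by simpa using sub_ne_zero.2 (ne_of_mem_of_not_mem ht hx).symm)
  rw [← Ideal.dvd_span_singleton, ← Ideal.prod_span_singleton, pow_dvd_iff_le_emultiplicity,
    Finset.emultiplicity_prod hprime,
    sum_congr rfl fun t ht => (hfin t ht).emultiplicity_eq_multiplicity, nodalOrd]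
  norm_cast

theorem nodalOrd_eq_sum_classCount (hp0 : 𝔭 ≠ ⊥) (hx : x ∉ T) {M : ℕ}
    (hM : nodalOrd 𝔭 T x ≤ M) : nodalOrd 𝔭 T x = ∑ k ∈ Icc 1 M, classCount (𝔭 ^ k) T x := by
  simp only [classCount, card_filter]
  rw [sum_comm, nodalOrd]
  refine sum_congr rfl fun t ht => ?_
  have hxt : x - t ≠ 0 := sub_ne_zero.2 (ne_of_mem_of_not_mem ht hx).symm
  have htM : multiplicity 𝔭 (Ideal.span {x - t}) ≤ M := (single_le_sum (by simp) ht).trans hM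
  simp_rw [sub_mem_comm_iff (a := t), mem_pow_iff_le_multiplicity hp0 hxt, ← card_filter]
  rw [show (Icc 1 M).filter (· ≤ multiplicity 𝔭 (Ideal.span {x - t})) =
    Icc 1 (multiplicity 𝔭 (Ideal.span {x - t})) by ext; simp; omega]
  simp

theorem classCount_pow_eq_zero (hp0 : 𝔭 ≠ ⊥) (hx : x ∉ T) {k : ℕ} (hk : nodalOrd 𝔭 T x < k) :
    classCount (𝔭 ^ k) T x = 0 := by
  refine card_eq_zero.2 (filter_eq_empty_iff.2 fun t ht htx => hk.not_ge ?_)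
  have hxt : x - t ≠ 0 := sub_ne_zero.2 (ne_of_mem_of_not_mem ht hx).symm
  exact ((mem_pow_iff_le_multiplicity hp0 hxt).1 (sub_mem_comm_iff.1 htx)).trans
    (single_le_sum (f := fun t => multiplicity 𝔭 (Ideal.span {x - t})) (by simp) ht)

theorem nodalOrd_erase_self_le (hp0 : 𝔭 ≠ ⊥) (hT : ∀ k, 0 < k → IsAUD (𝔭 ^ k) T) {s a : R}
    (hs : s ∈ T) (ha : a ∉ T) : nodalOrd 𝔭 (T.erase s) s ≤ nodalOrd 𝔭 (T.erase s) a := by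
  have ha' : a ∉ T.erase s := fun h => ha (mem_of_mem_erase h)
  obtain ⟨M, hsM, haM⟩ : ∃ M, nodalOrd 𝔭 (T.erase s) s ≤ M ∧ nodalOrd 𝔭 (T.erase s) a ≤ M :=
    ⟨_, le_max_left _ _, le_max_right _ _⟩
  rw [nodalOrd_eq_sum_classCount hp0 (notMem_erase s T) hsM,
    nodalOrd_eq_sum_classCount hp0 ha' haM]
  exact sum_le_sum fun k hk => (hT k (mem_Icc.1 hk).1).classCount_erase_self_le hs a

theorem forall_classCount_pow_le_of_forall_nodalOrd_le [Ring.HasFiniteQuotients R]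
    (hp0 : 𝔭 ≠ ⊥) (hT : ∀ k, 0 < k → IsAUD (𝔭 ^ k) T) (hx : x ∉ T)
    (hmin : ∀ y ∉ T, nodalOrd 𝔭 T x ≤ nodalOrd 𝔭 T y) (k : ℕ) (b : R) :
    classCount (𝔭 ^ k) T x ≤ classCount (𝔭 ^ k) T b := by
  have hfin : ∀ k, Finite (R ⧸ 𝔭 ^ k) := fun k =>
    Ring.HasFiniteQuotients.finiteQuotient (pow_ne_zero k hp0)
  obtain ⟨y, hy, hylev⟩ := exists_notMem_forall_classCount_pow_le hfin hT
    (classCount_pow_eq_zero hp0 hx (Nat.lt_succ_self _))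
  set M := nodalOrd 𝔭 T y
  have hxM : nodalOrd 𝔭 T x ≤ M := hmin y hy
  have hle : ∀ j ∈ Icc 1 M, classCount (𝔭 ^ j) T y ≤ classCount (𝔭 ^ j) T x :=
    fun j _ => hylev j x
  have hsum :
      ∑ j ∈ Icc 1 M, classCount (𝔭 ^ j) T x ≤ ∑ j ∈ Icc 1 M, classCount (𝔭 ^ j) T y := by
    rwa [← nodalOrd_eq_sum_classCount hp0 hx hxM, ← nodalOrd_eq_sum_classCount hp0 hy le_rfl]
  have heq := (sum_eq_sum_iff_of_le hle).1 (le_antisymm (sum_le_sum hle) hsum)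
  rcases Nat.eq_zero_or_pos k with rfl | hk0
  · simp [classCount_top]
  rcases le_or_gt k M with hkM | hkM
  · rw [← heq k (mem_Icc.2 ⟨hk0, hkM⟩)]
    exact hylev k b
  · rw [classCount_pow_eq_zero hp0 hx (hxM.trans_lt hkM)]
    exact Nat.zero_le _

theorem exists_dvd_mul_iff_mem_pow (hp0 : 𝔭 ≠ ⊥) (c : ℕ) :
    ∃ u w : R, u ≠ 0 ∧ ∀ z, u ∣ w * z ↔ z ∈ 𝔭 ^ c := by
  have hprime := Ideal.prime_of_isPrime hp0 ‹_›
  obtain ⟨u, hu, hu'⟩ := Ideal.exists_mem_pow_notMem_pow_succ 𝔭 hp0 Ideal.IsPrime.ne_top' c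
  obtain ⟨B, hB⟩ : 𝔭 ^ c ∣ Ideal.span {u} := Ideal.dvd_span_singleton.2 hu
  have hBp : ¬B ≤ 𝔭 := fun h => hu' <| by
    rw [← Ideal.dvd_span_singleton, hB, pow_succ]
    exact mul_dvd_mul_left _ (Ideal.dvd_iff_le.2 h)
  obtain ⟨w, hwB, hwp⟩ := SetLike.not_le_iff_exists.1 hBp
  refine ⟨u, w, fun h => hu' (h ▸ zero_mem _), fun z => ?_⟩
  rw [← Ideal.span_singleton_le_span_singleton, ← Ideal.dvd_iff_le, hB,
    ← Ideal.span_singleton_mul_span_singleton, ← Ideal.dvd_span_singleton]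
  constructor
  · exact fun h => hprime.pow_dvd_of_dvd_mul_left c
      (fun h' => hwp (Ideal.dvd_span_singleton.1 h')) ((dvd_mul_right _ _).trans h)
  · intro h
    rw [mul_comm (Ideal.span {w})]
    exact mul_dvd_mul h (Ideal.dvd_iff_le.2 ((Ideal.span_singleton_le_iff_mem _).2 hwB))

end Dedekind

section Universal

open IsDedekindDomain HeightOneSpectrum

variable {R : Type*} [CommRing R] [IsDedekindDomain R] {K : Type*} [Field K] [Algebra R K]
  [IsFractionRing R K] {𝔭 : Ideal R} [𝔭.IsPrime] {n : ℕ} {S T : Finset R}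

theorem IsNUniversal.prod_sub_mem_pow (hS : IsNUniversal R K n S) (hp0 : 𝔭 ≠ ⊥) (hT : #T ≤ n)
    {c : ℕ} (hc : ∀ s ∈ S, ∏ t ∈ T, (s - t) ∈ 𝔭 ^ c) (x : R) : ∏ t ∈ T, (x - t) ∈ 𝔭 ^ c := by
  obtain ⟨u, w, hu, huw⟩ := exists_dvd_mul_iff_mem_pow hp0 c
  let P : K[X] := C (algebraMap R K w / algebraMap R K u) * Lagrange.nodal T (algebraMap R K)
  have hP : ∀ y, (∃ b, P.eval (algebraMap R K y) = algebraMap R K b) ↔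
      ∏ t ∈ T, (y - t) ∈ 𝔭 ^ c := by
    intro y
    simp only [← huw, ← exists_algebraMap_eq_div_iff_dvd (K := K) hu, P, eval_mul, eval_C,
      Lagrange.eval_nodal, map_mul, map_prod, map_sub, div_mul_eq_mul_div]
  have hdeg : P.natDegree ≤ n :=
    (natDegree_C_mul_le _ _).trans (Lagrange.natDegree_nodal.trans_le hT)
  exact (hP x).1 ((hS P hdeg).2 (fun s hs => (hP s).2 (hc s hs)) x)

theorem IsNUniversal.exists_mem_forall_nodalOrd_le (hS : IsNUniversal R K n S) (hp0 : 𝔭 ≠ ⊥)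
    (hT : #T ≤ n) : ∃ s ∈ S, s ∉ T ∧ ∀ x ∉ T, nodalOrd 𝔭 T s ≤ nodalOrd 𝔭 T x := by
  have := infinite_of_isPrime_of_ne_bot hp0
  obtain ⟨x₀, hx₀⟩ := Infinite.exists_notMem_finset T
  set x := Function.argminOn (nodalOrd 𝔭 T) {x | x ∉ T} ⟨x₀, hx₀⟩
  have hx : x ∉ T := Function.argminOn_mem _ {x | x ∉ T} _
  have hxmin : ∀ y ∉ T, nodalOrd 𝔭 T x ≤ nodalOrd 𝔭 T y := fun y hy =>
    Function.argminOn_le _ {x | x ∉ T} hy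
  by_contra! h
  suffices ∏ t ∈ T, (x - t) ∈ 𝔭 ^ (nodalOrd 𝔭 T x + 1) by
    have := (prod_sub_mem_pow_iff hp0 hx).1 this
    omega
  refine hS.prod_sub_mem_pow hp0 hT (fun s hs => ?_) x
  by_cases hsT : s ∈ T
  · rw [prod_eq_zero hsT (sub_self s)]
    exact zero_mem _
  · obtain ⟨y, hy, hys⟩ := h s hs hsT
    exact (prod_sub_mem_pow_iff hp0 hsT).2 ((hxmin y hy).trans_lt hys)

theorem IsNUniversal.exists_subset_card_eq_isAUD [Ring.HasFiniteQuotients R]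
    (hS : IsNUniversal R K n S) (hp0 : 𝔭 ≠ ⊥) :
    ∃ S' ⊆ S, #S' = n + 1 ∧ ∀ k, 0 < k → IsAUD (𝔭 ^ k) S' := by
  suffices h : ∀ l ≤ n + 1, ∃ T ⊆ S, #T = l ∧ ∀ k, 0 < k → IsAUD (𝔭 ^ k) T from h _ le_rfl
  intro l hl
  induction l with
  | zero => exact ⟨∅, empty_subset _, card_empty, fun k _ a b => by simp⟩
  | succ l ih =>
    obtain ⟨T, hTS, rfl, hT⟩ := ih (by omega)
    obtain ⟨s, hs, hsT, hmin⟩ := hS.exists_mem_forall_nodalOrd_le hp0 (T := T) (by omega)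
    exact ⟨insert s T, insert_subset hs hTS, card_insert_of_notMem hsT, fun k hk =>
      (hT k hk).insert hsT (forall_classCount_pow_le_of_forall_nodalOrd_le hp0 hT hsT hmin k)⟩

theorem valuation_div_le_one_of_forall_mem_pow (v : HeightOneSpectrum R) {r r' : R}
    (hr' : r' ≠ 0) (h : ∀ k, r' ∈ v.asIdeal ^ k → r ∈ v.asIdeal ^ k) :
    v.valuation K (algebraMap R K r / algebraMap R K r') ≤ 1 := by
  have hv := v.intValuation_eq_exp_neg_multiplicity hr'
  rw [map_div₀, valuation_of_algebraMap, valuation_of_algebraMap,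
    div_le_one₀ (zero_lt_iff.2 (v.intValuation_ne_zero r' hr')), hv,
    intValuation_le_pow_iff_mem]
  exact h _ ((v.intValuation_le_pow_iff_mem r' _).1 hv.le)

theorem isNUniversal_of_forall_exists_isAUD
    (h : ∀ 𝔭 : Ideal R, 𝔭.IsPrime → 𝔭 ≠ ⊥ →
      ∃ S' ⊆ S, #S' = n + 1 ∧ ∀ k, 0 < k → IsAUD (𝔭 ^ k) S') :
    IsNUniversal R K n S := by
  refine fun P hP => ⟨fun hPR s _ => hPR s, fun hPS a => ?_⟩
  by_cases haS : a ∈ S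
  · exact hPS a haS
  suffices hv : ∀ v : HeightOneSpectrum R, v.valuation K (P.eval (algebraMap R K a)) ≤ 1 by
    obtain ⟨b, hb⟩ := mem_integers_of_valuation_le_one K _ hv
    exact ⟨b, hb.symm⟩
  intro v
  have := v.isPrime
  obtain ⟨S', hS'S, hcard, hS'⟩ := h v.asIdeal v.isPrime v.ne_bot
  have hdeg : P.degree < #S' := by
    rw [hcard]
    exact degree_le_natDegree.trans_lt (by exact_mod_cast Nat.lt_succ_of_le hP)
  rw [Lagrange.eval_eq_sum_mul_prod_div (IsFractionRing.injective R K).injOn hdeg]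
  refine Valuation.map_sum_le _ fun s hs => ?_
  obtain ⟨c, hc⟩ := hPS s (hS'S hs)
  have ha : a ∉ S'.erase s := fun h => haS (hS'S (mem_of_mem_erase h))
  have hsne : ∏ t ∈ S'.erase s, (s - t) ≠ 0 := prod_ne_zero_iff.2 fun t ht =>
    sub_ne_zero.2 (ne_of_mem_erase ht).symm
  have hord := nodalOrd_erase_self_le v.ne_bot hS' hs fun h => haS (hS'S h)
  simp_rw [hc, ← map_sub, ← map_prod, map_mul]
  refine mul_le_one' (v.valuation_le_one c)
    (valuation_div_le_one_of_forall_mem_pow v hsne fun k hk => ?_)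
  exact (prod_sub_mem_pow_iff v.ne_bot ha).2
    (((prod_sub_mem_pow_iff v.ne_bot (notMem_erase s S')).1 hk).trans hord)

theorem isNUniversal_iff_forall_exists_isAUD [Ring.HasFiniteQuotients R] :
    IsNUniversal R K n S ↔ ∀ 𝔭 : Ideal R, 𝔭.IsPrime → 𝔭 ≠ ⊥ →
      ∃ S' ⊆ S, #S' = n + 1 ∧ ∀ k, 0 < k → IsAUD (𝔭 ^ k) S' :=
  ⟨fun hS _ _ hp0 => hS.exists_subset_card_eq_isAUD hp0, isNUniversal_of_forall_exists_isAUD⟩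

end Universal

/-- Let `K` be a number field with ring of integers `𝓞 K`. A finite subset `S` of
`𝓞 K` is `n`-universal if and only if for every non-zero prime ideal `𝔭` of `𝓞 K`
there exists a subset `S' ⊆ S` with `n + 1` elements which is almost uniformly
distributed modulo `𝔭 ^ k` for every positive integer `k`. -/
theorem stmt5 {K : Type*} [Field K] [NumberField K] (n : ℕ) (S : Finset (𝓞 K)) :
    IsNUniversal (𝓞 K) K n S ↔
      ∀ 𝔭 : Ideal (𝓞 K), 𝔭.IsPrime → 𝔭 ≠ ⊥ →
        ∃ S' ⊆ S, S'.card = n + 1 ∧ ∀ k : ℕ, 0 < k → IsAUD (𝔭 ^ k) S' :=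
  isNUniversal_iff_forall_exists_isAUD
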